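/- arXiv:1411.3015 — 3 statements merged into one kernel-verified Lean document; each statement's English description precedes it below -/
import Mathlib

section
/- Consider the ground program SAT0 and the specification S defined in the context. Then SAT0 is complete w.r.t. S; that is, S is contained in the least Herbrand model of SAT0. -/
/-- The immediate consequence operator of a ground program `P`. -/
def TP {α : Type*} (P : Set (List α × α)) : Set α →o Set α :=
  ⟨fun I => {H | ∃ B : List α, (B, H) ∈ P ∧ ∀ A ∈ B, A ∈ I},
   by
     intro I J h H hH
     obtain ⟨B, hB, hall⟩ := hH
     exact ⟨B, hB, fun A hA => h (hall A hA)⟩⟩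

/-- The least Herbrand model of a ground program: the least fixed point of `TP P`. -/
def MP {α : Type*} (P : Set (List α × α)) : Set α := OrderHom.lfp (TP P)

/-- The Herbrand universe for SAT0. -/
inductive Term : Type
  | tt : Term
  | ff : Term
  | pair : Term → Term → Term
  | nil : Term
  | cons : Term → Term → Term

/-- Ground atoms: three binary predicates `p`, `q`, `eq` over `Term`. -/
abbrev Atom : Type := (Term × Term) ⊕ ((Term × Term) ⊕ (Term × Term))

/-- The atom `p(t, u)`. -/
def pA (t u : Term) : Atom := Sum.inl (t, u)
/-- The atom `q(t, u)`. -/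
def qA (t u : Term) : Atom := Sum.inr (Sum.inl (t, u))
/-- The atom `eq(t, u)`. -/
def eqA (t u : Term) : Atom := Sum.inr (Sum.inr (t, u))

/-- Ground instances of the clause `p(P-P, nil)`. -/
def C1 : Set (List Atom × Atom) :=
  {C | ∃ P : Term, C = ([], pA (Term.pair P P) Term.nil)}
/-- Ground instances of the clause `p(V-P, cons B T) ← q(V-P, cons B T)`. -/
def C2 : Set (List Atom × Atom) :=
  {C | ∃ V P B T : Term,
    C = ([qA (Term.pair V P) (Term.cons B T)], pA (Term.pair V P) (Term.cons B T))}
/-- Ground instances of the clause `p(V-P, cons B T) ← q(B, cons (V-P) T)`. -/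
def C3 : Set (List Atom × Atom) :=
  {C | ∃ V P B T : Term,
    C = ([qA B (Term.cons (Term.pair V P) T)], pA (Term.pair V P) (Term.cons B T))}
/-- Ground instances of the clause `q(V-P, W) ← eq(V, P)`. -/
def C4 : Set (List Atom × Atom) :=
  {C | ∃ V P W : Term, C = ([eqA V P], qA (Term.pair V P) W)}
/-- Ground instances of the clause `q(U, cons A T) ← p(A, T)`. -/
def C5 : Set (List Atom × Atom) :=
  {C | ∃ U A T : Term, C = ([pA A T], qA U (Term.cons A T))}
/-- Ground instances of the clause `eq(P, P)`. -/
def C6 : Set (List Atom × Atom) :=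
  {C | ∃ P : Term, C = ([], eqA P P)}

/-- The program SAT0. -/
def SAT0 : Set (List Atom × Atom) := C1 ∪ C2 ∪ C3 ∪ C4 ∪ C5 ∪ C6

/-- The list term representing a list of terms. -/
def listTerm : List Term → Term := fun l => l.foldr Term.cons Term.nil

/-- The set 𝕋 = {ff, tt} of truth values. -/
def TV : Set Term := {Term.ff, Term.tt}

/-- The specification S for SAT0. -/
def SpecS : Set Atom :=
  {a | ∃ (t₀ u₀ : Term) (ps : List (Term × Term)),
    t₀ ∈ TV ∧ u₀ ∈ TV ∧ (∀ p ∈ ps, p.1 ∈ TV ∧ p.2 ∈ TV) ∧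
      (t₀ = u₀ ∨ ∃ p ∈ ps, p.1 = p.2) ∧
      (a = pA (Term.pair t₀ u₀) (listTerm (ps.map fun p => Term.pair p.1 p.2)) ∨
        a = qA (Term.pair t₀ u₀) (listTerm (ps.map fun p => Term.pair p.1 p.2)))} ∪
  {a | ∃ t : Term, a = eqA t t}

lemma mp_step {H : Atom} {B : List Atom} (hC : (B, H) ∈ SAT0)
    (hB : ∀ A ∈ B, A ∈ MP SAT0) : H ∈ MP SAT0 := by
  have h : TP SAT0 (MP SAT0) = MP SAT0 := OrderHom.map_lfp (TP SAT0)
  have : H ∈ TP SAT0 (MP SAT0) := ⟨B, hC, hB⟩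
  rwa [h] at this

lemma in1 {C} (h : C ∈ C1) : C ∈ SAT0 := Or.inl (Or.inl (Or.inl (Or.inl (Or.inl h))))
lemma in2 {C} (h : C ∈ C2) : C ∈ SAT0 := Or.inl (Or.inl (Or.inl (Or.inl (Or.inr h))))
lemma in3 {C} (h : C ∈ C3) : C ∈ SAT0 := Or.inl (Or.inl (Or.inl (Or.inr h)))
lemma in4 {C} (h : C ∈ C4) : C ∈ SAT0 := Or.inl (Or.inl (Or.inr h))
lemma in5 {C} (h : C ∈ C5) : C ∈ SAT0 := Or.inl (Or.inr h)
lemma in6 {C} (h : C ∈ C6) : C ∈ SAT0 := Or.inr h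

lemma eq_mem (t : Term) : eqA t t ∈ MP SAT0 :=
  mp_step (in6 ⟨t, rfl⟩) (by simp)

lemma q_eq_mem (t : Term) (W : Term) : qA (Term.pair t t) W ∈ MP SAT0 :=
  mp_step (in4 ⟨t, t, W, rfl⟩) (by
    intro A hA
    simp only [List.mem_singleton] at hA
    subst hA; exact eq_mem t)

/-- `p(t-t, L)` holds for any term `L`. -/
lemma p_diag_mem (t : Term) (L : Term) :
    (L = Term.nil ∨ ∃ B T, L = Term.cons B T) → pA (Term.pair t t) L ∈ MP SAT0 := by
  rintro (rfl | ⟨B, T, rfl⟩)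
  · exact mp_step (in1 ⟨t, rfl⟩) (by simp)
  · exact mp_step (in2 ⟨t, t, B, T, rfl⟩) (by
      intro A hA
      simp only [List.mem_singleton] at hA
      subst hA; exact q_eq_mem t _)

lemma listTerm_shape (l : List Term) :
    listTerm l = Term.nil ∨ ∃ B T, listTerm l = Term.cons B T := by
  cases l with
  | nil => exact Or.inl rfl
  | cons a l => exact Or.inr ⟨a, listTerm l, rfl⟩

/-- If some pair in `ps` has equal components, then `p(V-P, [ps]) ∈ M`. -/
lemma p_witness_mem (ps : List (Term × Term)) (hw : ∃ p ∈ ps, p.1 = p.2) :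
    ∀ V P : Term,
      pA (Term.pair V P) (listTerm (ps.map fun p => Term.pair p.1 p.2)) ∈ MP SAT0 := by
  induction ps with
  | nil => simp at hw
  | cons a rest ih =>
    intro V P
    obtain ⟨p, hp, hpe⟩ := hw
    rcases List.mem_cons.mp hp with rfl | hrest
    · -- head has equal components: use C3
      have h3 : ([qA (Term.pair p.1 p.2) (Term.cons (Term.pair V P)
            (listTerm (rest.map fun p => Term.pair p.1 p.2)))],
          pA (Term.pair V P) (Term.cons (Term.pair p.1 p.2)
            (listTerm (rest.map fun p => Term.pair p.1 p.2)))) ∈ C3 :=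
        ⟨V, P, Term.pair p.1 p.2, listTerm (rest.map fun p => Term.pair p.1 p.2), rfl⟩
      exact mp_step (in3 h3) (by
        intro A hA
        simp only [List.mem_singleton] at hA
        subst hA
        rw [hpe]
        exact q_eq_mem _ _)
    · -- witness in rest: use IH, then C5 then C2
      have hp' := ih ⟨p, hrest, hpe⟩ a.1 a.2
      set T := listTerm (rest.map fun p => Term.pair p.1 p.2) with hT
      have hq : qA (Term.pair V P) (Term.cons (Term.pair a.1 a.2) T) ∈ MP SAT0 :=
        mp_step (in5 ⟨Term.pair V P, Term.pair a.1 a.2, T, rfl⟩) (by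
          intro A hA
          simp only [List.mem_singleton] at hA
          subst hA; exact hp')
      exact mp_step (in2 ⟨V, P, Term.pair a.1 a.2, T, rfl⟩) (by
        intro A hA
        simp only [List.mem_singleton] at hA
        subst hA; exact hq)

theorem sat0_complete : SpecS ⊆ MP SAT0 := by
  rintro a (⟨t₀, u₀, ps, _, _, _, hw, ha⟩ | ⟨t, rfl⟩)
  · -- first prove the p-atom is in MP
    have hp : pA (Term.pair t₀ u₀) (listTerm (ps.map fun p => Term.pair p.1 p.2)) ∈
        MP SAT0 := by
      rcases hw with rfl | hw
      · exact p_diag_mem t₀ _ (listTerm_shape _)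
      · exact p_witness_mem ps hw t₀ u₀
    rcases ha with rfl | rfl
    · exact hp
    · -- q-atom
      rcases hw with rfl | ⟨p, hp', hpe⟩
      · exact q_eq_mem t₀ _
      · rcases ps with _ | ⟨a, rest⟩
        · simp at hp'
        · set T := listTerm (rest.map fun p => Term.pair p.1 p.2) with hT
          have hpa : pA (Term.pair a.1 a.2) T ∈ MP SAT0 := by
            rcases List.mem_cons.mp hp' with rfl | hrest
            · rw [hpe]; exact p_diag_mem _ _ (listTerm_shape _)
            · exact p_witness_mem rest ⟨p, hrest, hpe⟩ a.1 a.2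
          exact mp_step (in5 ⟨Term.pair t₀ u₀, Term.pair a.1 a.2, T, rfl⟩) (by
            intro A hA
            simp only [List.mem_singleton] at hA
            subst hA; exact hpa)
  · exact eq_mem t
end

section
/- The ground program SAT0 is recurrent w.r.t. the level mapping |·| given by |p(t, u)| = 2·‖u‖ + 2, |q(t, u)| = 2·‖u‖ + 1, and |eq(t, u)| = 0, where ‖cons h t‖ = 1 + ‖t‖ and ‖t‖ = 0 for any term t not of the form cons h t'; that is, for every clause of SAT0 the level of the head is strictly greater than the level of each body atom. -/
/-- The length ‖·‖ of a term. -/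
def len : Term → ℕ
  | Term.cons _ t => 1 + len t
  | _ => 0

/-- The level mapping for SAT0. -/
def lvl : Atom → ℕ
  | Sum.inl (_, u) => 2 * len u + 2
  | Sum.inr (Sum.inl (_, u)) => 2 * len u + 1
  | Sum.inr (Sum.inr _) => 0

theorem sat0_recurrent :
    ∀ B H, (B, H) ∈ SAT0 → ∀ A ∈ B, lvl A < lvl H := by
  rintro B H (((((h|h)|h)|h)|h)|h) A hA
  · obtain ⟨P, hc⟩ := h; simp_all
  · obtain ⟨V, P, Bt, T, hc⟩ := h
    obtain ⟨h1, h2⟩ := Prod.mk.injEq .. ▸ hc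
    subst h1 h2; simp_all [qA, pA, lvl]
  · obtain ⟨V, P, Bt, T, hc⟩ := h
    obtain ⟨h1, h2⟩ := Prod.mk.injEq .. ▸ hc
    subst h1 h2; simp_all [qA, pA, lvl, len]; try omega
  · obtain ⟨V, P, W, hc⟩ := h
    obtain ⟨h1, h2⟩ := Prod.mk.injEq .. ▸ hc
    subst h1 h2; simp_all [eqA, qA, lvl]
  · obtain ⟨U, A', T, hc⟩ := h
    obtain ⟨h1, h2⟩ := Prod.mk.injEq .. ▸ hc
    subst h1 h2; simp_all [pA, qA, lvl, len]; try omega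
  · obtain ⟨P, hc⟩ := h; simp_all
end

section
/- Let Π₁ be SAT0 with all ground instances of the clause p(V-P, cons B T) ← q(B, cons (V-P) T) removed, and Π₂ be SAT0 with all ground instances of the clause p(V-P, cons B T) ← q(V-P, cons B T) removed. Then each of Π₁ and Π₂ is complete w.r.t. S; that is, S is contained in the least Herbrand model of Π₁ and in the least Herbrand model of Π₂. -/
/-- SAT0 with ground instances of the clause `p(V-P, cons B T) ← q(B, cons (V-P) T)` removed. -/
def Pi1 : Set (List Atom × Atom) := C1 ∪ C2 ∪ C4 ∪ C5 ∪ C6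

/-- SAT0 with ground instances of the clause `p(V-P, cons B T) ← q(V-P, cons B T)` removed. -/
def Pi2 : Set (List Atom × Atom) := C1 ∪ C3 ∪ C4 ∪ C5 ∪ C6


lemma mem_MP_step {α : Type*} {P : Set (List α × α)} {H : α} {B : List α}
    (h1 : (B, H) ∈ P) (h2 : ∀ A ∈ B, A ∈ MP P) : H ∈ MP P := by
  have h : H ∈ (TP P) (OrderHom.lfp (TP P)) := ⟨B, h1, h2⟩
  rwa [OrderHom.map_lfp] at h

-- Pi1 clause memberships
lemma eq_MP1 (t : Term) : eqA t t ∈ MP Pi1 :=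
  mem_MP_step (Or.inr ⟨t, rfl⟩) (by simp)

lemma q_C4_1 (t W : Term) : qA (Term.pair t t) W ∈ MP Pi1 :=
  mem_MP_step (Or.inl (Or.inl (Or.inr ⟨t, t, W, rfl⟩)))
    (by rintro A hA; simp only [List.mem_singleton] at hA; subst hA; exact eq_MP1 t)

lemma q_C5_1 {A T : Term} (U : Term) (h : pA A T ∈ MP Pi1) :
    qA U (Term.cons A T) ∈ MP Pi1 :=
  mem_MP_step (Or.inl (Or.inr ⟨U, A, T, rfl⟩))
    (by rintro x hx; simp only [List.mem_singleton] at hx; subst hx; exact h)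

lemma p_C1_1 (t : Term) : pA (Term.pair t t) Term.nil ∈ MP Pi1 :=
  mem_MP_step (Or.inl (Or.inl (Or.inl (Or.inl ⟨t, rfl⟩)))) (by simp)

lemma p_C2_1 {V P B T : Term} (h : qA (Term.pair V P) (Term.cons B T) ∈ MP Pi1) :
    pA (Term.pair V P) (Term.cons B T) ∈ MP Pi1 :=
  mem_MP_step (Or.inl (Or.inl (Or.inl (Or.inr ⟨V, P, B, T, rfl⟩))))
    (by rintro x hx; simp only [List.mem_singleton] at hx; subst hx; exact h)

-- Pi2 clause memberships
lemma eq_MP2 (t : Term) : eqA t t ∈ MP Pi2 :=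
  mem_MP_step (Or.inr ⟨t, rfl⟩) (by simp)

lemma q_C4_2 (t W : Term) : qA (Term.pair t t) W ∈ MP Pi2 :=
  mem_MP_step (Or.inl (Or.inl (Or.inr ⟨t, t, W, rfl⟩)))
    (by rintro A hA; simp only [List.mem_singleton] at hA; subst hA; exact eq_MP2 t)

lemma q_C5_2 {A T : Term} (U : Term) (h : pA A T ∈ MP Pi2) :
    qA U (Term.cons A T) ∈ MP Pi2 :=
  mem_MP_step (Or.inl (Or.inr ⟨U, A, T, rfl⟩))
    (by rintro x hx; simp only [List.mem_singleton] at hx; subst hx; exact h)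

lemma p_C1_2 (t : Term) : pA (Term.pair t t) Term.nil ∈ MP Pi2 :=
  mem_MP_step (Or.inl (Or.inl (Or.inl (Or.inl ⟨t, rfl⟩)))) (by simp)

lemma p_C3_2 {V P B T : Term} (h : qA B (Term.cons (Term.pair V P) T) ∈ MP Pi2) :
    pA (Term.pair V P) (Term.cons B T) ∈ MP Pi2 :=
  mem_MP_step (Or.inl (Or.inl (Or.inl (Or.inr ⟨V, P, B, T, rfl⟩))))
    (by rintro x hx; simp only [List.mem_singleton] at hx; subst hx; exact h)

lemma key1 : ∀ (ps : List (Term × Term)) (t u : Term),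
    (t = u ∨ ∃ p ∈ ps, p.1 = p.2) →
    pA (Term.pair t u) (listTerm (ps.map fun p => Term.pair p.1 p.2)) ∈ MP Pi1 ∧
    qA (Term.pair t u) (listTerm (ps.map fun p => Term.pair p.1 p.2)) ∈ MP Pi1
  | [], t, u, h => by
    rcases h with rfl | ⟨p, hp, _⟩
    · exact ⟨p_C1_1 t, q_C4_1 t _⟩
    · simp at hp
  | (a :: rest), t, u, h => by
    have lrec : listTerm ((a :: rest).map fun p => Term.pair p.1 p.2)
        = Term.cons (Term.pair a.1 a.2) (listTerm (rest.map fun p => Term.pair p.1 p.2)) := rfl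
    rw [lrec]
    have hq : qA (Term.pair t u)
        (Term.cons (Term.pair a.1 a.2) (listTerm (rest.map fun p => Term.pair p.1 p.2)))
        ∈ MP Pi1 := by
      rcases h with rfl | ⟨p, hp, hpe⟩
      · exact q_C4_1 t _
      · rcases List.mem_cons.mp hp with rfl | hp'
        · exact q_C5_1 _ (key1 rest p.1 p.2 (Or.inl hpe)).1
        · exact q_C5_1 _ (key1 rest a.1 a.2 (Or.inr ⟨p, hp', hpe⟩)).1
    exact ⟨p_C2_1 hq, hq⟩

lemma key2 : ∀ (ps : List (Term × Term)) (t u : Term),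
    (t = u ∨ ∃ p ∈ ps, p.1 = p.2) →
    pA (Term.pair t u) (listTerm (ps.map fun p => Term.pair p.1 p.2)) ∈ MP Pi2 ∧
    qA (Term.pair t u) (listTerm (ps.map fun p => Term.pair p.1 p.2)) ∈ MP Pi2
  | [], t, u, h => by
    rcases h with rfl | ⟨p, hp, _⟩
    · exact ⟨p_C1_2 t, q_C4_2 t _⟩
    · simp at hp
  | (a :: rest), t, u, h => by
    have lrec : listTerm ((a :: rest).map fun p => Term.pair p.1 p.2)
        = Term.cons (Term.pair a.1 a.2) (listTerm (rest.map fun p => Term.pair p.1 p.2)) := rfl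
    rw [lrec]
    rcases h with rfl | ⟨p, hp, hpe⟩
    · refine ⟨p_C3_2 (q_C5_2 _ (key2 rest t t (Or.inl rfl)).1), q_C4_2 t _⟩
    · rcases List.mem_cons.mp hp with rfl | hp'
      · have hq : qA (Term.pair t u)
            (Term.cons (Term.pair p.1 p.2) (listTerm (rest.map fun x => Term.pair x.1 x.2)))
            ∈ MP Pi2 := q_C5_2 _ (key2 rest p.1 p.2 (Or.inl hpe)).1
        refine ⟨p_C3_2 ?_, hq⟩
        rw [hpe]
        exact q_C4_2 p.2 _
      · have hIH := key2 rest t u (Or.inr ⟨p, hp', hpe⟩)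
        have hIH' := key2 rest a.1 a.2 (Or.inr ⟨p, hp', hpe⟩)
        exact ⟨p_C3_2 (q_C5_2 _ hIH.1), q_C5_2 _ hIH'.1⟩

theorem pi1_pi2_complete : SpecS ⊆ MP Pi1 ∧ SpecS ⊆ MP Pi2 := by
  constructor <;>
  · rintro a (⟨t0, u0, ps, -, -, -, heq, (rfl | rfl)⟩ | ⟨t, rfl⟩)
    all_goals first
    | exact (key1 ps t0 u0 heq).1
    | exact (key1 ps t0 u0 heq).2
    | exact eq_MP1 t
    | exact (key2 ps t0 u0 heq).1
    | exact (key2 ps t0 u0 heq).2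
    | exact eq_MP2 t
end
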